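/- arXiv:1405.3527 — 2 statements merged into one kernel-verified Lean document; each statement's English description precedes it below -/
import Mathlib

section
/- Let m,n ≥ 1 and let d be a choice of one diagonal per cell of the m×n grid, with triangulation graph T_d. Then T_d is 3-colorable if and only if T_d contains no induced subgraph isomorphic to T1 and no induced subgraph isomorphic to T2. -/
/-- The edges of the 3×3 grid graph on vertices `0,…,8` (labels `1,…,9`, rows
`(1,2,3), (4,5,6), (7,8,9)` from top to bottom; vertex `i : Fin 9` has label `i+1`). -/
def gridEdges33 : Set (Sym2 (Fin 9)) :=
  {s(0, 1), s(1, 2), s(3, 4), s(4, 5), s(6, 7), s(7, 8),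
   s(0, 3), s(1, 4), s(2, 5), s(3, 6), s(4, 7), s(5, 8)}

/-- The triangulation `T1`: the 3×3 grid together with the diagonals
`{2,4}, {2,6}, {5,7}, {6,8}` (in labels `1,…,9`). -/
def T1 : SimpleGraph (Fin 9) :=
  SimpleGraph.fromEdgeSet (gridEdges33 ∪ {s(1, 3), s(1, 5), s(4, 6), s(5, 7)})

/-- The triangulation `T2`: the 3×3 grid together with the diagonals
`{1,5}, {3,5}, {5,9}, {4,8}` (in labels `1,…,9`). -/
def T2 : SimpleGraph (Fin 9) :=
  SimpleGraph.fromEdgeSet (gridEdges33 ∪ {s(0, 4), s(2, 4), s(4, 8), s(3, 7)})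
/-- The triangulation of the `m × n` grid graph (vertex set `{0,…,m} × {0,…,n}`)
determined by the choice `d` of a diagonal for each cell: all grid edges, plus for
each cell `(i,j)` the main diagonal `{(i,j),(i+1,j+1)}` if `d i j = 0` and the
anti-diagonal `{(i+1,j),(i,j+1)}` if `d i j = 1`. -/
def GridTri (m n : ℕ) (d : ℕ → ℕ → Fin 2) :
    SimpleGraph (Fin (m + 1) × Fin (n + 1)) :=
  SimpleGraph.fromRel fun p q =>
    (q.1.val = p.1.val + 1 ∧ q.2.val = p.2.val) ∨
    (q.1.val = p.1.val ∧ q.2.val = p.2.val + 1) ∨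
    (d p.1.val p.2.val = 0 ∧ q.1.val = p.1.val + 1 ∧ q.2.val = p.2.val + 1) ∨
    (d q.1.val p.2.val = 1 ∧ p.1.val = q.1.val + 1 ∧ q.2.val = p.2.val + 1)

/-!
Call a `2 × 2` block of cells odd if it holds an odd number of anti-diagonals, i.e. if the vertex
at its centre has odd degree. An odd block, with the nine vertices around it, is a reflection of
`T1` or of `T2`, and these are not 3-colourable because each contains an odd wheel. If no block
is odd, the mixed differences of `d` vanish, so `d i j = s i + t j` in `ZMod 2`. Colour `(i, j)`
by the sum in `ZMod 3` of the steps `±1` along the bottom row up to `i` (signs given by `s`) and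
up the column up to `j` (signs given by `t`): the ends of a main diagonal then differ by the sum
of two equal steps, the ends of an anti-diagonal by the difference of two opposite steps.
-/

open SimpleGraph Finset

theorem SimpleGraph.not_colorable_three_of_odd_wheel {V : Type*} {G : SimpleGraph V} {k : ℕ}
    (hk : Odd k) (h2k : 2 ≤ k) (hub : V) (rim : cycleGraph k →g G)
    (hadj : ∀ i, G.Adj hub (rim i)) : ¬ G.Colorable 3 := by
  rintro ⟨c⟩
  let c' : (cycleGraph k).Coloring {x : Fin 3 // x ≠ c hub} :=
    Coloring.mk (fun i => ⟨c (rim i), (c.valid (hadj i)).symm⟩) fun h => by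
      simpa [Subtype.ext_iff] using c.valid (rim.map_adj h)
  have := c'.colorable.chromaticNumber_le
  rw [chromaticNumber_cycleGraph_of_odd k h2k hk, Fintype.card_subtype_compl] at this
  norm_num at this

instance : DecidableRel T1.Adj := by delta T1 gridEdges33; infer_instance

instance : DecidableRel T2.Adj := by delta T2 gridEdges33; infer_instance

theorem T1_not_colorable : ¬ T1.Colorable 3 :=
  not_colorable_three_of_odd_wheel (k := 5) (by decide) (by norm_num) 4
    ⟨![1, 3, 6, 7, 5], by decide⟩ (by decide)

theorem T2_not_colorable : ¬ T2.Colorable 3 :=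
  not_colorable_three_of_odd_wheel (k := 7) (by decide) (by norm_num) 4
    ⟨![0, 1, 2, 5, 8, 7, 3], by decide⟩ (by decide)

theorem eq_add_sub_of_mixed_diff_eq_zero {G : Type*} [AddCommGroup G] {m n : ℕ}
    {f : ℕ → ℕ → G}
    (h : ∀ i j, i + 1 < m → j + 1 < n →
      f (i + 1) (j + 1) - f (i + 1) j - f i (j + 1) + f i j = 0) :
    ∀ i < m, ∀ j < n, f i j = f i 0 + f 0 j - f 0 0 := by
  intro i
  induction i with
  | zero => intro _ j _; abel
  | succ i ih =>
    intro hi j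
    induction j with
    | zero => intro _; abel
    | succ j ihj =>
      intro hj
      have hblock := h i j hi hj
      rw [ih (by omega) j (by omega), ih (by omega) (j + 1) hj, ihj (by omega)] at hblock
      rw [← sub_eq_zero, ← hblock]
      abel

namespace GridTri

variable {m n : ℕ} {d : ℕ → ℕ → Fin 2}

instance : DecidableRel (GridTri m n d).Adj := by delta GridTri; infer_instance

theorem eq_of_forall_cell_eq {d' : ℕ → ℕ → Fin 2}
    (h : ∀ i < m, ∀ j < n, d i j = d' i j) : GridTri m n d = GridTri m n d' := by
  ext p q
  simp only [GridTri, fromRel_adj]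
  grind

def subgridEmbedding (i j : ℕ) {m' n' : ℕ} (hm : i + m' ≤ m) (hn : j + n' ≤ n) :
    GridTri m' n' (fun a b => d (i + a) (j + b)) ↪g GridTri m n d where
  toFun p := (⟨i + p.1, by omega⟩, ⟨j + p.2, by omega⟩)
  inj' p q h := by simp only [Prod.ext_iff, Fin.ext_iff, Nat.add_left_cancel_iff] at h ⊢; exact h
  map_rel_iff' {p q} := by
    change (GridTri m n d).Adj (⟨i + p.1, _⟩, ⟨j + p.2, _⟩) (⟨i + q.1, _⟩, ⟨j + q.2, _⟩) ↔
      (GridTri m' n' _).Adj p q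
    simp only [GridTri, fromRel_adj, ne_eq, Prod.ext_iff, Fin.ext_iff]
    grind

theorem colorable_of_eq_add (s t : ℕ → Fin 2) (h : ∀ i < m, ∀ j < n, d i j = s i + t j) :
    (GridTri m n d).Colorable 3 := by
  let step : Fin 2 → ZMod 3 := ![1, -1]
  let c (i j : ℕ) : ZMod 3 := ∑ k ∈ range i, step (s k) + ∑ l ∈ range j, step (t l)
  have c_right (i j : ℕ) : c (i + 1) j = c i j + step (s i) := by
    simp only [c, sum_range_succ]; abel
  have c_up (i j : ℕ) : c i (j + 1) = c i j + step (t j) := by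
    simp only [c, sum_range_succ]; abel
  have step_ne_zero : ∀ a, step a ≠ 0 := by decide
  have step_add_ne_zero : ∀ a b, a + b = 0 → step a + step b ≠ 0 := by decide
  have step_ne : ∀ a b, a + b = 1 → step a ≠ step b := by decide
  have c_ne_right (i j : ℕ) : c i j ≠ c (i + 1) j := by
    simpa [c_right] using step_ne_zero (s i)
  have c_ne_up (i j : ℕ) : c i j ≠ c i (j + 1) := by
    simpa [c_up] using step_ne_zero (t j)
  have c_ne_diag (i j : ℕ) (hi : i < m) (hj : j < n) (hd : d i j = 0) :
      c i j ≠ c (i + 1) (j + 1) := by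
    rw [c_up, c_right, add_assoc]
    simpa using step_add_ne_zero _ _ ((h i hi j hj).symm.trans hd)
  have c_ne_antidiag (i j : ℕ) (hi : i < m) (hj : j < n) (hd : d i j = 1) :
      c (i + 1) j ≠ c i (j + 1) := by
    rw [c_up, c_right]
    simpa using step_ne _ _ ((h i hi j hj).symm.trans hd)
  refine (Coloring.mk (fun p => c p.1 p.2) fun {p q} hpq => ?_).colorable
  obtain ⟨-, hpq | hpq⟩ := hpq
  on_goal 2 => refine Ne.symm ?_
  all_goals
    rcases hpq with ⟨h₁, h₂⟩ | ⟨h₁, h₂⟩ | ⟨hd, h₁, h₂⟩ | ⟨hd, h₁, h₂⟩ <;>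
      rw [h₁, h₂]
    · exact c_ne_right _ _
    · exact c_ne_up _ _
    · exact c_ne_diag _ _ (by omega) (by omega) hd
    · exact c_ne_antidiag _ _ (by omega) (by omega) hd

/-- `v ↦ (v / 3, v % 3)` -/
def labelPos : Fin 9 ≃ Fin 3 × Fin 3 := (finProdFinEquiv (m := 3) (n := 3)).symm

def block (w₀₀ w₁₀ w₀₁ w₁₁ : Fin 2) (a b : ℕ) : Fin 2 :=
  if a = 0 then (if b = 0 then w₀₀ else w₀₁) else (if b = 0 then w₁₀ else w₁₁)

theorem T1_or_T2_embeds_in_block {w₀₀ w₁₀ w₀₁ w₁₁ : Fin 2}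
    (h : w₀₀ + w₁₀ + w₀₁ + w₁₁ = 1) :
    Nonempty (T1 ↪g GridTri 2 2 (block w₀₀ w₁₀ w₀₁ w₁₁)) ∨
      Nonempty (T2 ↪g GridTri 2 2 (block w₀₀ w₁₀ w₀₁ w₁₁)) := by
  fin_cases w₀₀ <;> fin_cases w₁₀ <;> fin_cases w₀₁ <;> fin_cases w₁₁ <;>
    try exact absurd h (by decide)
  · exact .inl ⟨⟨⟨Prod.map Fin.rev id ∘ labelPos, by decide⟩, by decide⟩⟩
  · exact .inr ⟨⟨⟨labelPos, by decide⟩, by decide⟩⟩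
  · exact .inr ⟨⟨⟨Prod.map Fin.rev Fin.rev ∘ labelPos, by decide⟩, by decide⟩⟩
  · exact .inr ⟨⟨⟨Prod.map id Fin.rev ∘ labelPos, by decide⟩, by decide⟩⟩
  · exact .inl ⟨⟨⟨Prod.map id Fin.rev ∘ labelPos, by decide⟩, by decide⟩⟩
  · exact .inl ⟨⟨⟨Prod.map Fin.rev Fin.rev ∘ labelPos, by decide⟩, by decide⟩⟩
  · exact .inl ⟨⟨⟨labelPos, by decide⟩, by decide⟩⟩
  · exact .inr ⟨⟨⟨Prod.map Fin.rev id ∘ labelPos, by decide⟩, by decide⟩⟩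

theorem T1_or_T2_embeds_of_mixed_diff_ne_zero {i j : ℕ} (hi : i + 2 ≤ m) (hj : j + 2 ≤ n)
    (hodd : d (i + 1) (j + 1) - d (i + 1) j - d i (j + 1) + d i j ≠ 0) :
    Nonempty (T1 ↪g GridTri m n d) ∨ Nonempty (T2 ↪g GridTri m n d) := by
  have hblock : GridTri 2 2 (fun a b => d (i + a) (j + b)) =
      GridTri 2 2 (block (d i j) (d (i + 1) j) (d i (j + 1)) (d (i + 1) (j + 1))) :=
    eq_of_forall_cell_eq fun a ha b hb => by interval_cases a <;> interval_cases b <;> rfl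
  let ι := hblock ▸ subgridEmbedding (d := d) i j hi hj
  exact (T1_or_T2_embeds_in_block (by omega)).imp (Nonempty.map ι.comp) (Nonempty.map ι.comp)

end GridTri

theorem gridTri_colorable_iff_no_T1_T2_general
    (m n : ℕ) (d : ℕ → ℕ → Fin 2) :
    (GridTri m n d).Colorable 3 ↔
      (¬ Nonempty (T1 ↪g GridTri m n d) ∧ ¬ Nonempty (T2 ↪g GridTri m n d)) := by
  refine ⟨fun h => ⟨fun ⟨φ⟩ => T1_not_colorable (h.of_hom φ.toHom),
    fun ⟨φ⟩ => T2_not_colorable (h.of_hom φ.toHom)⟩, fun ⟨h₁, h₂⟩ => ?_⟩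
  refine GridTri.colorable_of_eq_add (fun i => d i 0 - d 0 0) (d 0) fun i hi j hj => ?_
  rw [sub_add_eq_add_sub]
  refine eq_add_sub_of_mixed_diff_eq_zero (fun a b ha hb => ?_) i hi j hj
  by_contra hodd
  exact (GridTri.T1_or_T2_embeds_of_mixed_diff_ne_zero (by omega) (by omega) hodd).elim h₁ h₂

/-- A triangulation of the `m × n` grid graph is 3-colorable if and only if it contains
no induced subgraph isomorphic to `T1` or `T2`. -/
theorem gridTri_colorable_iff_no_T1_T2
    (m n : ℕ) (hm : 1 ≤ m) (hn : 1 ≤ n) (d : ℕ → ℕ → Fin 2) :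
    (GridTri m n d).Colorable 3 ↔
      (¬ Nonempty (T1 ↪g GridTri m n d) ∧ ¬ Nonempty (T2 ↪g GridTri m n d)) :=
  gridTri_colorable_iff_no_T1_T2_general m n d
end

section
/- For every n ≥ 1, the graph obtained from the path graph on n vertices by replacing each vertex with a module K2 — namely, the graph with vertex set {1,…,n}×{0,1} in which distinct vertices (i,a) and (j,b) are adjacent if and only if i = j or |i−j| = 1 — is word-representable. -/
/-- Two letters `x` and `y` alternate in the word `w` if the subsequence of `w`
consisting of all occurrences of `x` and `y` has no two consecutive equal letters. -/
def Alternates {V : Type*} [DecidableEq V] (w : List V) (x y : V) : Prop :=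
  (w.filter fun z => decide (z = x ∨ z = y)).Chain' (· ≠ ·)

/-- A word `w` represents the graph `G`: every vertex occurs in `w`, and two distinct
letters alternate in `w` iff they are adjacent in `G`. -/
def Represents {V : Type*} [DecidableEq V] (G : SimpleGraph V) (w : List V) : Prop :=
  (∀ v : V, v ∈ w) ∧ ∀ x y : V, x ≠ y → (Alternates w x y ↔ G.Adj x y)

/-- A graph is word-representable if some word represents it. -/
def WordRepresentable {V : Type*} [DecidableEq V] (G : SimpleGraph V) : Prop :=
  ∃ w : List V, Represents G w

/-- The graph obtained from the path graph on `n` vertices by replacing each vertex by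
a module `K₂`: vertices `(i, a)` with `i : Fin n`, `a : Fin 2`, with distinct vertices
`(i, a)` and `(j, b)` adjacent iff `i = j` or `|i - j| = 1`. -/
def PathK2 (n : ℕ) : SimpleGraph (Fin n × Fin 2) :=
  SimpleGraph.fromRel fun p q =>
    p.1 = q.1 ∨ p.1.val + 1 = q.1.val ∨ q.1.val + 1 = p.1.val

/-!
The word `0 1 0 2 1 3 2 ⋯ n (n-1)` represents the path on `0, …, n`: two consecutive letters
`x, x+1` occur in it as `x (x+1) x (x+1)` (or `x (x+1) x` at the end), while letters `x < y - 1`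
occur as `x x y ⋯`. Replacing every letter `v` of a word representing `G` by the block
`(v, a₁) ⋯ (v, aₖ)` represents the graph in which every vertex becomes a clique on `a₁, …, aₖ`:
two copies of one vertex alternate because the blocks repeat, and copies of distinct vertices
alternate exactly when the vertices do. `PathK2 n` is the path on `n` vertices blown up with `K₂`.
-/

section Alternates

variable {V W : Type*} [DecidableEq V] [DecidableEq W] {w w' : List V} {x y : V}

theorem alternates_iff_isChain :
    Alternates w x y ↔ (w.filter fun z => decide (z = x ∨ z = y)).IsChain (· ≠ ·) :=
  Iff.rfl

theorem alternates_comm : Alternates w x y ↔ Alternates w y x := by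
  simp only [alternates_iff_isChain, or_comm]

theorem Alternates.prefix (h : Alternates w' x y) (hw : w <+: w') : Alternates w x y :=
  List.IsChain.prefix h (hw.filter _)

theorem alternates_map_iff {f : V → W} (hf : Function.Injective f) :
    Alternates (w.map f) (f x) (f y) ↔ Alternates w x y := by
  simp only [alternates_iff_isChain, List.filter_map, List.isChain_map, hf.ne_iff]
  simp only [Function.comp_def, hf.eq_iff]

end Alternates

def pathWord : ℕ → List ℕ
  | 0 => [0]
  | n + 1 => pathWord n ++ [n + 1, n]

theorem mem_pathWord {n z : ℕ} : z ∈ pathWord n ↔ z ≤ n := by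
  induction n with
  | zero => simp [pathWord]
  | succ n ih =>
    simp only [pathWord, List.mem_append, ih, List.mem_cons, List.not_mem_nil, or_false]
    omega

theorem pathWord_prefix {m n : ℕ} (h : m ≤ n) : pathWord m <+: pathWord n := by
  induction n, h using Nat.le_induction with
  | base => exact List.prefix_refl _
  | succ n _ ih => exact ih.trans (List.prefix_append _ _)

theorem filter_pathWord_eq_singleton {n : ℕ} {p : ℕ → Bool} (hn : p n) (hlt : ∀ z < n, ¬p z) :
    (pathWord n).filter p = [n] := by
  cases n with
  | zero => simp [pathWord, hn]
  | succ n =>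
    have hnil : (pathWord n).filter p = [] :=
      List.filter_eq_nil_iff.2 fun z hz => hlt z (Nat.lt_succ_of_le (mem_pathWord.1 hz))
    simp [pathWord, hnil, hn, hlt n]

theorem filter_pathWord_of_le {m n : ℕ} {p : ℕ → Bool} (h : m ≤ n) (hge : ∀ z, m ≤ z → ¬p z) :
    (pathWord n).filter p = (pathWord m).filter p := by
  induction n, h using Nat.le_induction with
  | base => rfl
  | succ n hmn ih =>
    simp [pathWord, ih, hge n hmn, hge (n + 1) (by omega)]

theorem alternates_pathWord_iff_of_lt {n x y : ℕ} (hxy : x < y) (hy : y ≤ n) :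
    Alternates (pathWord n) x y ↔ x + 1 = y := by
  obtain rfl | hfar := (show y = x + 1 ∨ x + 2 ≤ y by omega)
  · simp only [iff_true]
    -- the filtered word stops growing at `pathWord (x + 2)`, so pass to a longer word
    have hstable : Alternates (pathWord (n + 1)) x (x + 1) := by
      rw [alternates_iff_isChain, filter_pathWord_of_le (m := x + 2) (by omega) (by simp; omega)]
      have hx : (pathWord x).filter (fun z => decide (z = x ∨ z = x + 1)) = [x] :=
        filter_pathWord_eq_singleton (by simp) (by simp; omega)
      simp only [pathWord, List.filter_append, hx]
      simp [show x + 1 + 1 ≠ x by omega]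
    exact hstable.prefix (pathWord_prefix n.le_succ)
  · refine iff_of_false (fun h => ?_) (by omega)
    -- `pathWord (x + 1)` already contains both copies of `x` and no `y`
    have hx : (pathWord x).filter (fun z => decide (z = x ∨ z = y)) = [x] :=
      filter_pathWord_eq_singleton (by simp) (by simp; omega)
    have := h.prefix (pathWord_prefix (show x + 1 ≤ n by omega))
    simp only [alternates_iff_isChain, pathWord, List.filter_append, hx] at this
    simp [show x + 1 ≠ y by omega] at this

theorem alternates_pathWord_iff {n x y : ℕ} (hx : x ≤ n) (hy : y ≤ n) (hxy : x ≠ y) :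
    Alternates (pathWord n) x y ↔ x + 1 = y ∨ y + 1 = x := by
  rcases Nat.lt_or_gt_of_ne hxy with h | h
  · rw [alternates_pathWord_iff_of_lt h hy]; omega
  · rw [alternates_comm, alternates_pathWord_iff_of_lt h hx]; omega

theorem pathGraph_wordRepresentable (n : ℕ) : WordRepresentable (SimpleGraph.pathGraph n) := by
  cases n with
  | zero => exact ⟨[], fun v => v.elim0, fun x => x.elim0⟩
  | succ m =>
    lift pathWord m to List (Fin (m + 1)) using
      fun z hz => Nat.lt_succ_of_le (mem_pathWord.1 hz) with w hw
    refine ⟨w, fun v => ?_, fun x y hxy => ?_⟩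
    · rw [← List.mem_map_of_injective Fin.val_injective, hw]
      exact mem_pathWord.2 (Nat.le_of_lt_succ v.isLt)
    · rw [← alternates_map_iff Fin.val_injective, hw, SimpleGraph.pathGraph_adj,
        alternates_pathWord_iff (Nat.le_of_lt_succ x.isLt) (Nat.le_of_lt_succ y.isLt)
          (Fin.val_ne_of_ne hxy)]

def SimpleGraph.cliqueBlowup {V : Type*} (G : SimpleGraph V) (α : Type*) : SimpleGraph (V × α) :=
  SimpleGraph.fromRel fun p q => p.1 = q.1 ∨ G.Adj p.1 q.1

@[simp]
theorem SimpleGraph.cliqueBlowup_adj {V α : Type*} {G : SimpleGraph V} {p q : V × α} :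
    (G.cliqueBlowup α).Adj p q ↔ p ≠ q ∧ (p.1 = q.1 ∨ G.Adj p.1 q.1) := by
  rw [cliqueBlowup, fromRel_adj, G.adj_comm q.1, eq_comm (a := q.1), or_self]

theorem List.Nodup.filter_eq_singleton {α : Type*} [DecidableEq α] {L : List α} {a : α}
    (hL : L.Nodup) (ha : a ∈ L) : L.filter (fun c => decide (c = a)) = [a] := by
  rw [List.filter_eq, List.count_eq_one_of_mem hL ha, List.replicate_one]

theorem List.isChain_ne_flatMap_ite_pair {β γ : Type*} (l : List γ) (p : γ → Prop)
    [DecidablePred p] {s t : β} (hst : s ≠ t) :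
    (l.flatMap fun z => if p z then [s, t] else []).IsChain (· ≠ ·) := by
  suffices h : (l.flatMap fun z => if p z then [s, t] else []).IsChain (· ≠ ·) ∧
      ∀ y ∈ (l.flatMap fun z => if p z then [s, t] else []).head?, y = s from h.1
  induction l with
  | nil => simp
  | cons z l ih =>
    by_cases hz : p z
    · simp only [List.flatMap_cons, hz, if_true, List.cons_append, List.nil_append,
        List.isChain_cons, List.head?_cons, Option.mem_def, Option.some.injEq, forall_eq']
      exact ⟨⟨hst, fun y hy => (ih.2 y hy).symm ▸ hst.symm, ih.1⟩, trivial⟩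
    · simpa [hz] using ih

section Blowup

variable {V α : Type*} [DecidableEq V] [DecidableEq α] {L : List α} {w : List V} {a b : α}

theorem alternates_flatMap_map_of_ne (hL : L.Nodup) (ha : a ∈ L) (hb : b ∈ L) {u v : V}
    (huv : u ≠ v) :
    Alternates (w.flatMap fun z => L.map (z, ·)) (u, a) (v, b) ↔ Alternates w u v := by
  let f : V → V × α := fun z => (z, if z = u then a else b)
  have hf : Function.Injective f := fun z z' h => congrArg Prod.fst h
  have hfu : f u = (u, a) := by simp [f]
  have hfv : f v = (v, b) := by simp [f, huv.symm]
  have hfiber : ∀ z, (L.map (z, ·)).filter (fun p => decide (p = (u, a) ∨ p = (v, b))) =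
      [f z].filter (fun p => decide (p = (u, a) ∨ p = (v, b))) := by
    intro z
    by_cases hzu : z = u
    · subst hzu
      simp [f, List.filter_map, Function.comp_def, huv, hL.filter_eq_singleton ha]
    by_cases hzv : z = v
    · subst hzv
      simp [f, List.filter_map, Function.comp_def, hzu, hL.filter_eq_singleton hb]
    · simp [f, List.filter_map, Function.comp_def, hzu, hzv]
  rw [← alternates_map_iff hf, hfu, hfv, alternates_iff_isChain, alternates_iff_isChain,
    List.filter_flatMap, List.map_eq_flatMap, List.filter_flatMap,
    List.flatMap_congr fun z _ => hfiber z]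

theorem alternates_flatMap_map_self (hL : L.Nodup) (ha : a ∈ L) (hb : b ∈ L) (hab : a ≠ b)
    (u : V) : Alternates (w.flatMap fun z => L.map (z, ·)) (u, a) (u, b) := by
  obtain ⟨s, t, hst, hpair⟩ :
      ∃ s t, s ≠ t ∧ L.filter (fun c => decide (c = a ∨ c = b)) = [s, t] := by
    have hperm : (L.filter fun c => decide (c = a ∨ c = b)).Perm [a, b] :=
      (List.perm_ext_iff_of_nodup (hL.filter _) (by simp [hab])).2 fun c => by
        simp only [List.mem_filter, decide_eq_true_eq, List.mem_cons, List.not_mem_nil, or_false]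
        constructor
        · exact fun h => h.2
        · rintro (rfl | rfl) <;> simp [ha, hb]
    obtain ⟨s, t, hst⟩ := List.length_eq_two.1 hperm.length_eq
    have hnodup := hL.filter (fun c => decide (c = a ∨ c = b))
    rw [hst] at hnodup
    exact ⟨s, t, by simpa using hnodup, hst⟩
  have hfiber : ∀ z, (L.map (z, ·)).filter (fun p => decide (p = (u, a) ∨ p = (u, b))) =
      if z = u then [(u, s), (u, t)] else [] := by
    intro z
    by_cases hzu : z = u
    · subst hzu
      simp only [List.filter_map, Function.comp_def, Prod.mk.injEq, true_and, if_true, hpair]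
      rfl
    · simp [List.filter_map, Function.comp_def, hzu]
  rw [alternates_iff_isChain, List.filter_flatMap, List.flatMap_congr fun z _ => hfiber z]
  exact List.isChain_ne_flatMap_ite_pair w (· = u) (by simpa using hst)

end Blowup

theorem Represents.cliqueBlowup {V α : Type*} [DecidableEq V] [DecidableEq α] [Fintype α]
    {G : SimpleGraph V} {w : List V} (h : Represents G w) :
    Represents (G.cliqueBlowup α)
      (w.flatMap fun v => (Finset.univ : Finset α).toList.map (v, ·)) := by
  have hL := (Finset.univ : Finset α).nodup_toList
  have hmem : ∀ a, a ∈ (Finset.univ : Finset α).toList := by simp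
  refine ⟨fun p => List.mem_flatMap.2 ⟨p.1, h.1 p.1, List.mem_map.2 ⟨p.2, hmem _, rfl⟩⟩, ?_⟩
  rintro ⟨u, a⟩ ⟨v, b⟩ hne
  rw [SimpleGraph.cliqueBlowup_adj]
  by_cases huv : u = v
  · subst huv
    have hab : a ≠ b := fun hab => hne (hab ▸ rfl)
    exact iff_of_true (alternates_flatMap_map_self hL (hmem a) (hmem b) hab u) ⟨hne, Or.inl rfl⟩
  · rw [alternates_flatMap_map_of_ne hL (hmem a) (hmem b) huv, h.2 u v huv]
    simp [hne, huv]

theorem pathK2_eq_cliqueBlowup (n : ℕ) :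
    PathK2 n = (SimpleGraph.pathGraph n).cliqueBlowup (Fin 2) := by
  ext p q
  simp only [PathK2, SimpleGraph.fromRel_adj, SimpleGraph.cliqueBlowup_adj,
    SimpleGraph.pathGraph_adj, ne_eq, and_congr_right_iff]
  grind

theorem pathK2_wordRepresentable_general (n : ℕ) :
    WordRepresentable (PathK2 n) := by
  obtain ⟨w, hw⟩ := pathGraph_wordRepresentable n
  rw [pathK2_eq_cliqueBlowup]
  exact ⟨_, hw.cliqueBlowup⟩

/-- The graph obtained from a path by replacing each vertex by the module `K₂` is
word-representable. -/
theorem pathK2_wordRepresentable (n : ℕ) (hn : 1 ≤ n) :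
    WordRepresentable (PathK2 n) :=
  pathK2_wordRepresentable_general n
end
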